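/- Suppose W is diagonalizable over ℂ: there exist linearly independent row vectors v_1, …, v_N ∈ ℂ^{1×N} and λ_1, …, λ_N ∈ ℂ with v_i·W = λ_i·v_i for all i. Assume: (1) the pair (W, Δ) satisfies the PBH condition; (2) for every i = 1, …, N the pair (E_{λ_i}, 𝓑(h)) satisfies the PBH condition; (3) for every θ ∈ ℂ and every family of row vectors ξ_1, …, ξ_N ∈ ℂ^{1×n} with ξ_i·(θI − E_{λ_i}) = 0 for all i and not all ξ_i zero, one has (Σ_{i=1}^{N} v_i ⊗ ξ_i)·(Δ ⊗ 𝓑(h)) ≠ 0. Then the networked sampled-data system (Φ_s, Ψ_s) is controllable. -/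

import Mathlib

open Matrix
open scoped Kronecker

/-- Entrywise complexification of a real matrix. -/
noncomputable def cpx {a b : Type*} (M : Matrix a b ℝ) : Matrix a b ℂ :=
  M.map (Complex.ofReal)

/-- The matrix exponential `e^{M}`. -/
noncomputable def mexp {q : Type*} [Fintype q] [DecidableEq q]
    (M : Matrix q q ℝ) : Matrix q q ℝ :=
  NormedSpace.exp M

/-- The entrywise integral `∫₀ʰ e^{Aτ} dτ`. -/
noncomputable def intExp {q : Type*} [Fintype q] [DecidableEq q]
    (A : Matrix q q ℝ) (h : ℝ) : Matrix q q ℝ :=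
  Matrix.of fun i j => ∫ τ in (0:ℝ)..h, (NormedSpace.exp (τ • A)) i j

/-- `θ` is an eigenvalue of the complex square matrix `M`. -/
def IsEig {q : Type*} [Fintype q] [DecidableEq q] (M : Matrix q q ℂ) (θ : ℂ) : Prop :=
  (θ • (1 : Matrix q q ℂ) - M).det = 0

/-- PBH condition for a pair of complex matrices: for every `s ∈ ℂ`, the only row
vector `v` with `v (sI - M) = 0` and `v G = 0` is `v = 0`. -/
def PBH {q r : Type*} [Fintype q] [DecidableEq q] [Fintype r]
    (M : Matrix q q ℂ) (G : Matrix q r ℂ) : Prop :=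
  ∀ (s : ℂ) (v : q → ℂ), v ᵥ* (s • (1 : Matrix q q ℂ) - M) = 0 → v ᵥ* G = 0 → v = 0

/-- Controllability of a discrete-time linear system `x⁺ = F x + G u`:
every state can be steered to the origin in finitely many steps. -/
def Controllable {q r : Type*} [Fintype q] [DecidableEq q] [Fintype r]
    (F : Matrix q q ℝ) (G : Matrix q r ℝ) : Prop :=
  ∀ x : q → ℝ, ∃ (k : ℕ) (u : Fin k → r → ℝ),
    (F ^ k) *ᵥ x + ∑ j : Fin k, (F ^ (k - 1 - (j : ℕ))) *ᵥ (G *ᵥ u j) = 0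

/-- `𝓑(h) = (∫₀ʰ e^{Aτ} dτ)·B`. -/
noncomputable def sampB {n p : ℕ} (A : Matrix (Fin n) (Fin n) ℝ)
    (B : Matrix (Fin n) (Fin p) ℝ) (h : ℝ) : Matrix (Fin n) (Fin p) ℝ :=
  intExp A h * B

/-- `𝓗(h) = (∫₀ʰ e^{Aτ} dτ)·H·C`. -/
noncomputable def sampH {n m : ℕ} (A : Matrix (Fin n) (Fin n) ℝ)
    (H : Matrix (Fin n) (Fin m) ℝ) (C : Matrix (Fin m) (Fin n) ℝ) (h : ℝ) :
    Matrix (Fin n) (Fin n) ℝ :=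
  intExp A h * H * C

/-- `Φ_s = I_N ⊗ e^{Ah} + W ⊗ 𝓗(h)`. -/
noncomputable def Phis {n m N : ℕ} (A : Matrix (Fin n) (Fin n) ℝ)
    (H : Matrix (Fin n) (Fin m) ℝ) (C : Matrix (Fin m) (Fin n) ℝ)
    (W : Matrix (Fin N) (Fin N) ℝ) (h : ℝ) :
    Matrix (Fin N × Fin n) (Fin N × Fin n) ℝ :=
  (1 : Matrix (Fin N) (Fin N) ℝ) ⊗ₖ mexp (h • A) + W ⊗ₖ sampH A H C h

/-- `E_λ = e^{Ah} + λ·𝓗(h)` (complexified). -/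
noncomputable def Emat {n m : ℕ} (A : Matrix (Fin n) (Fin n) ℝ)
    (H : Matrix (Fin n) (Fin m) ℝ) (C : Matrix (Fin m) (Fin n) ℝ)
    (h : ℝ) (lam : ℂ) : Matrix (Fin n) (Fin n) ℂ :=
  cpx (mexp (h • A)) + lam • cpx (sampH A H C h)

/-!
By the PBH test it suffices that no left eigenvector `z` of `Φ_s`, for an eigenvalue `s`, annihilates
`Ψ_s` unless `z = 0`. As the `vᵢ` form a basis, `z = ∑ᵢ vᵢ ⊗ ξᵢ`, and `vᵢ W = λᵢ vᵢ` gives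
`z (sI - Φ_s) = ∑ᵢ vᵢ ⊗ ξᵢ (sI - E_{λᵢ})`; by independence of the `vᵢ` every `ξᵢ` is then a left
eigenvector of `E_{λᵢ}` for the common eigenvalue `s`, and condition (3) forbids `z Ψ_s = 0`.

The PBH test for a real pair `(F, G)` goes through the reachable subspace `∑ᵢ range (Fⁱ G)`: a real
covector killing it complexifies into a nonzero `F`-invariant space of covectors killing every `Fⁱ G`,
which contains an eigenvector of `F` annihilating `G`.
-/

section Complexification

variable {a b c d : Type*}

lemma cpx_add (M Q : Matrix a b ℝ) : cpx (M + Q) = cpx M + cpx Q := by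
  ext; simp [cpx]

lemma cpx_one [Fintype a] [DecidableEq a] : cpx (1 : Matrix a a ℝ) = 1 :=
  Matrix.map_one _ Complex.ofReal_zero Complex.ofReal_one

lemma cpx_mul [Fintype b] (M : Matrix a b ℝ) (Q : Matrix b c ℝ) :
    cpx (M * Q) = cpx M * cpx Q :=
  Matrix.map_mul (f := Complex.ofRealHom)

lemma cpx_pow [Fintype a] [DecidableEq a] (M : Matrix a a ℝ) (k : ℕ) :
    cpx (M ^ k) = cpx M ^ k :=
  Matrix.map_pow M Complex.ofRealHom k

lemma cpx_kronecker (M : Matrix a b ℝ) (Q : Matrix c d ℝ) :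
    cpx (M ⊗ₖ Q) = cpx M ⊗ₖ cpx Q := by
  ext; simp [cpx]

lemma ofReal_comp_vecMul [Fintype a] (w : a → ℝ) (M : Matrix a b ℝ) :
    (Complex.ofReal ∘ w) ᵥ* cpx M = Complex.ofReal ∘ (w ᵥ* M) := by
  ext; simp [cpx, vecMul, dotProduct]

end Complexification

section PBH

variable {q r : Type*} [Fintype q] [DecidableEq q] [Fintype r]

theorem eq_zero_of_forall_vecMul_pow_mul_eq_zero {M : Matrix q q ℂ} {G : Matrix q r ℂ}
    (hMG : PBH M G) {z : q → ℂ} (hz : ∀ i : ℕ, z ᵥ* (M ^ i * G) = 0) : z = 0 := by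
  set K : Submodule ℂ (q → ℂ) := ⨅ i : ℕ, LinearMap.ker (M ^ i * G).vecMulLinear
  have mem_K : ∀ y, y ∈ K ↔ ∀ i : ℕ, y ᵥ* (M ^ i * G) = 0 := by
    simp [K, Submodule.mem_iInf]
  have K_invariant : ∀ y ∈ K, M.vecMulLinear y ∈ K := by
    intro y hy
    rw [mem_K] at hy ⊢
    intro i
    simpa [vecMul_vecMul, ← Matrix.mul_assoc, ← pow_succ'] using hy (i + 1)
  by_contra hz0
  have : Nontrivial K := Submodule.nontrivial_iff_ne_bot.mpr fun hK =>
    hz0 (by simpa [hK] using (mem_K z).2 hz)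
  obtain ⟨c, hc⟩ := Module.End.exists_eigenvalue (M.vecMulLinear.restrict K_invariant)
  obtain ⟨x, hx, hx0⟩ := hc.exists_hasEigenvector
  have hxM : (x : q → ℂ) ᵥ* M = c • (x : q → ℂ) := by
    simpa [Module.End.mem_eigenspace_iff, Subtype.ext_iff] using hx
  have hxG : (x : q → ℂ) ᵥ* G = 0 := by simpa using (mem_K x).1 x.2 0
  refine hx0 (Subtype.ext (hMG c x ?_ hxG))
  rw [vecMul_sub, vecMul_smul, vecMul_one, hxM, sub_self]

theorem eq_zero_of_forall_vecMul_pow_mul_eq_zero_of_cpx {F : Matrix q q ℝ} {G : Matrix q r ℝ}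
    (hFG : PBH (cpx F) (cpx G)) {w : q → ℝ} (hw : ∀ i : ℕ, w ᵥ* (F ^ i * G) = 0) : w = 0 := by
  have : Complex.ofReal ∘ w = 0 := eq_zero_of_forall_vecMul_pow_mul_eq_zero hFG fun i => by
    rw [← cpx_pow, ← cpx_mul, ofReal_comp_vecMul, hw i]; ext; simp
  ext j; simpa using congrFun this j

theorem iSup_range_pow_mul_eq_top_of_PBH {F : Matrix q q ℝ} {G : Matrix q r ℝ}
    (hFG : PBH (cpx F) (cpx G)) :
    ⨆ i : ℕ, LinearMap.range (F ^ i * G).mulVecLin = ⊤ := by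
  classical
  by_contra hne
  obtain ⟨f, hf0, hf⟩ := Submodule.exists_le_ker_of_lt_top _ (lt_top_iff_ne_top.2 hne)
  set w := (dotProductEquiv ℝ q).symm f
  have hwf : ∀ y, w ⬝ᵥ y = f y := fun y =>
    congrArg (· y) ((dotProductEquiv ℝ q).apply_symm_apply f)
  refine hf0 ?_
  suffices w = 0 by rw [← (dotProductEquiv ℝ q).apply_symm_apply f]; simp [w, this]
  refine eq_zero_of_forall_vecMul_pow_mul_eq_zero_of_cpx hFG fun i => funext fun j => ?_
  rw [Pi.zero_apply, ← dotProduct_single_one (w ᵥ* _) j, ← dotProduct_mulVec, hwf]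
  exact hf (Submodule.mem_iSup_of_mem i ⟨_, rfl⟩)

end PBH

section Reachability

variable {q r : Type*} [Fintype q] [DecidableEq q] [Fintype r]

noncomputable def reachMap (F : Matrix q q ℝ) (G : Matrix q r ℝ) (k : ℕ) :
    (Fin k → r → ℝ) →ₗ[ℝ] q → ℝ :=
  ∑ j : Fin k, (F ^ (k - 1 - (j : ℕ)) * G).mulVecLin ∘ₗ LinearMap.proj j

lemma reachMap_apply (F : Matrix q q ℝ) (G : Matrix q r ℝ) (k : ℕ) (u : Fin k → r → ℝ) :
    reachMap F G k u = ∑ j : Fin k, F ^ (k - 1 - (j : ℕ)) *ᵥ (G *ᵥ u j) := by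
  simp [reachMap, LinearMap.sum_apply, mulVec_mulVec]

lemma range_pow_mul_le_range_reachMap (F : Matrix q q ℝ) (G : Matrix q r ℝ) {i k : ℕ}
    (hik : i < k) : LinearMap.range (F ^ i * G).mulVecLin ≤ LinearMap.range (reachMap F G k) := by
  rintro _ ⟨u₀, rfl⟩
  let j : Fin k := ⟨k - 1 - i, by omega⟩
  refine ⟨Pi.single j u₀, ?_⟩
  rw [reachMap_apply, Finset.sum_eq_single j (fun j' _ hj' => by simp [hj']) (by simp)]
  simp [j, show k - 1 - (k - 1 - i) = i by omega, mulVec_mulVec]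

theorem controllable_of_PBH {F : Matrix q q ℝ} {G : Matrix q r ℝ}
    (hFG : PBH (cpx F) (cpx G)) : Controllable F G := by
  have top_compact : IsCompactElement (⊤ : Submodule ℝ (q → ℝ)) :=
    (Submodule.fg_iff_compact ⊤).1 Module.Finite.fg_top
  obtain ⟨s, hs⟩ := CompleteLattice.IsCompactElement.exists_finset_of_le_iSup _ top_compact _
    (iSup_range_pow_mul_eq_top_of_PBH hFG).ge
  set k := s.sup id + 1
  have reach_top : LinearMap.range (reachMap F G k) = ⊤ := top_unique <| hs.trans <|
    iSup₂_le fun i hi => range_pow_mul_le_range_reachMap F G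
      (Nat.lt_succ_of_le (Finset.le_sup (f := id) hi))
  intro x
  obtain ⟨u, hu⟩ := LinearMap.range_eq_top.1 reach_top (-(F ^ k *ᵥ x))
  exact ⟨k, u, by rw [← reachMap_apply, hu, add_neg_cancel]⟩

end Reachability

section SumKron

variable {R ι a b c d : Type*} [CommRing R] [Fintype ι]

/-- `∑ᵢ vᵢ ⊗ ξᵢ` -/
def sumKron (v : ι → a → R) (ξ : ι → b → R) : a × b → R :=
  fun x => ∑ i, v i x.1 * ξ i x.2

lemma sumKron_vecMul_kronecker [Fintype a] [Fintype b] (v : ι → a → R) (ξ : ι → b → R)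
    (M : Matrix a c R) (K : Matrix b d R) :
    sumKron v ξ ᵥ* (M ⊗ₖ K) = sumKron (fun i => v i ᵥ* M) (fun i => ξ i ᵥ* K) := by
  ext ⟨x, y⟩
  simp only [sumKron, vecMul, dotProduct, kroneckerMap_apply, Fintype.sum_prod_type,
    Finset.sum_mul, Finset.mul_sum]
  rw [Finset.sum_comm_cycle]
  refine Finset.sum_congr rfl fun i _ => ?_
  rw [Finset.sum_comm]
  exact Finset.sum_congr rfl fun _ _ => Finset.sum_congr rfl fun _ _ => by ring

lemma sumKron_eq_zero_iff {v : ι → a → R} (hv : LinearIndependent R v) {ξ : ι → b → R} :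
    sumKron v ξ = 0 ↔ ξ = 0 := by
  refine ⟨fun h => ?_, fun h => by ext; simp [sumKron, h]⟩
  ext i y
  refine Fintype.linearIndependent_iff.1 hv (fun i => ξ i y) ?_ i
  ext x
  simpa [sumKron, mul_comm] using congrFun h (x, y)

lemma exists_sumKron_eq {v : ι → a → R} (hv : Submodule.span R (Set.range v) = ⊤)
    (z : a × b → R) : ∃ ξ : ι → b → R, sumKron v ξ = z := by
  have hcol : ∀ y, ∃ c : ι → R, ∑ i, c i • v i = fun x => z (x, y) := fun y =>
    (Submodule.mem_span_range_iff_exists_fun R).1 (hv ▸ Submodule.mem_top)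
  choose c hc using hcol
  refine ⟨fun i y => c y i, funext fun ⟨x, y⟩ => ?_⟩
  simpa [sumKron, mul_comm] using congrFun (hc y) x

lemma sumKron_vecMul_sub_one_kronecker_add_kronecker [Fintype a] [DecidableEq a] [Fintype b]
    [DecidableEq b] {v : ι → a → R} {M : Matrix a a R} {μ : ι → R}
    (hv : ∀ i, v i ᵥ* M = μ i • v i) (ξ : ι → b → R) (s : R) (E K : Matrix b b R) :
    sumKron v ξ ᵥ* (s • 1 - (1 ⊗ₖ E + M ⊗ₖ K)) =
      sumKron v (fun i => ξ i ᵥ* (s • 1 - (E + μ i • K))) := by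
  simp only [vecMul_sub, vecMul_add, vecMul_smul, vecMul_one, sumKron_vecMul_kronecker, hv]
  ext x
  simp only [sumKron, Pi.sub_apply, Pi.add_apply, Pi.smul_apply, smul_eq_mul, Finset.mul_sum,
    ← Finset.sum_add_distrib, ← Finset.sum_sub_distrib]
  exact Finset.sum_congr rfl fun _ _ => by ring

end SumKron

lemma cpx_Phis {n m N : ℕ} (A : Matrix (Fin n) (Fin n) ℝ) (H : Matrix (Fin n) (Fin m) ℝ)
    (C : Matrix (Fin m) (Fin n) ℝ) (W : Matrix (Fin N) (Fin N) ℝ) (h : ℝ) :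
    cpx (Phis A H C W h) = 1 ⊗ₖ cpx (mexp (h • A)) + cpx W ⊗ₖ cpx (sampH A H C h) := by
  rw [Phis, cpx_add, cpx_kronecker, cpx_kronecker, cpx_one]

theorem stmt4_general
    (n m p N : ℕ)
    (h : ℝ)
    (A : Matrix (Fin n) (Fin n) ℝ) (B : Matrix (Fin n) (Fin p) ℝ)
    (C : Matrix (Fin m) (Fin n) ℝ) (H : Matrix (Fin n) (Fin m) ℝ)
    (W : Matrix (Fin N) (Fin N) ℝ)
    (δ : Fin N → ℝ)
    (v : Fin N → Fin N → ℂ) (lam : Fin N → ℂ)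
    (hvli : LinearIndependent ℂ v)
    (hev : ∀ i, v i ᵥ* cpx W = lam i • v i)
    (h3 : ∀ θ : ℂ, ∀ ξ : Fin N → Fin n → ℂ,
      (∀ i, ξ i ᵥ* (θ • (1 : Matrix (Fin n) (Fin n) ℂ) - Emat A H C h (lam i)) = 0) →
      (∃ i, ξ i ≠ 0) →
      (fun q : Fin N × Fin n => ∑ i, v i q.1 * ξ i q.2) ᵥ*
        cpx (Matrix.diagonal δ ⊗ₖ sampB A B h) ≠ 0)
 :
    Controllable (Phis A H C W h) (Matrix.diagonal δ ⊗ₖ sampB A B h) := by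
  refine controllable_of_PBH fun s z hz hzΨ => ?_
  obtain ⟨ξ, rfl⟩ := exists_sumKron_eq (hvli.span_eq_top_of_card_eq_finrank' (by simp)) z
  rw [cpx_Phis, sumKron_vecMul_sub_one_kronecker_add_kronecker hev,
    sumKron_eq_zero_iff hvli] at hz
  by_contra hξ
  exact h3 s ξ (congrFun hz) (Function.ne_iff.1 (mt (sumKron_eq_zero_iff hvli).2 hξ)) hzΨ

theorem stmt4
    (n m p N : ℕ) (hn : 0 < n) (hm : 0 < m) (hp : 0 < p) (hN : 0 < N)
    (h : ℝ) (hh : 0 < h)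
    (A : Matrix (Fin n) (Fin n) ℝ) (B : Matrix (Fin n) (Fin p) ℝ)
    (C : Matrix (Fin m) (Fin n) ℝ) (H : Matrix (Fin n) (Fin m) ℝ)
    (W : Matrix (Fin N) (Fin N) ℝ)
    (δ : Fin N → ℝ) (hδ : ∀ i, δ i = 0 ∨ δ i = 1)
    (v : Fin N → Fin N → ℂ) (lam : Fin N → ℂ)
    (hvli : LinearIndependent ℂ v)
    (hev : ∀ i, v i ᵥ* cpx W = lam i • v i)
    (h1 : PBH (cpx W) (cpx (Matrix.diagonal δ)))
    (h2 : ∀ i, PBH (Emat A H C h (lam i)) (cpx (sampB A B h)))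
    (h3 : ∀ θ : ℂ, ∀ ξ : Fin N → Fin n → ℂ,
      (∀ i, ξ i ᵥ* (θ • (1 : Matrix (Fin n) (Fin n) ℂ) - Emat A H C h (lam i)) = 0) →
      (∃ i, ξ i ≠ 0) →
      (fun q : Fin N × Fin n => ∑ i, v i q.1 * ξ i q.2) ᵥ*
        cpx (Matrix.diagonal δ ⊗ₖ sampB A B h) ≠ 0)
 :
    Controllable (Phis A H C W h) (Matrix.diagonal δ ⊗ₖ sampB A B h) :=
  stmt4_general n m p N h A B C H W δ v lam hvli hev h3
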